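/- Theorem 11 (invariance of converting): let G be a canonical finite digraph. Then every iterated line digraph L^j(G) (j = 0, 1, 2, …) is canonical — equivalently, no complicated vertex ever arises under consecutive converting — if and only if every directed walk in G is holonomic. -/

import Mathlib

universe u

/-- The line digraph of a digraph `G`: vertices are the edges of `G`. -/
def lineDigraph {V : Type u} (G : Digraph V) : Digraph {e : V × V // G.Adj e.1 e.2} where
  Adj e f := e.1.2 = f.1.1

instance {V : Type u} (G : Digraph V) [Fintype V] [DecidableRel G.Adj] :
    Fintype {e : V × V // G.Adj e.1 e.2} :=
  Subtype.fintype _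

instance {V : Type u} (G : Digraph V) [DecidableEq V] :
    DecidableRel (lineDigraph G).Adj :=
  fun e f => inferInstanceAs (Decidable (e.1.2 = f.1.1))

/-- The finset of (directed) edges of `G`. -/
def edgeFinset {V : Type u} (G : Digraph V) [Fintype V] [DecidableRel G.Adj] :
    Finset (V × V) :=
  Finset.univ.filter (fun p => G.Adj p.1 p.2)

/-- The indegree of a vertex. -/
def indeg {V : Type u} (G : Digraph V) [Fintype V] [DecidableRel G.Adj] (v : V) : ℕ :=
  (Finset.univ.filter (fun u => G.Adj u v)).card

/-- The outdegree of a vertex. -/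
def outdeg {V : Type u} (G : Digraph V) [Fintype V] [DecidableRel G.Adj] (v : V) : ℕ :=
  (Finset.univ.filter (fun w => G.Adj v w)).card

/-- The cyclomatic number `ν(G) = |E| - |V| + 1`, as an integer. -/
def cyclomatic {V : Type u} (G : Digraph V) [Fintype V] [DecidableRel G.Adj] : ℤ :=
  ((edgeFinset G).card : ℤ) - (Fintype.card V : ℤ) + 1

/-- A directed walk of length `k` in `G`. -/
def IsWalk {V : Type u} (G : Digraph V) {k : ℕ} (w : Fin (k + 1) → V) : Prop :=
  ∀ i : Fin k, G.Adj (w i.castSucc) (w i.succ)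

instance {V : Type u} (G : Digraph V) [DecidableRel G.Adj] {k : ℕ} :
    DecidablePred (IsWalk G (k := k)) :=
  fun w => inferInstanceAs (Decidable (∀ i : Fin k, G.Adj (w i.castSucc) (w i.succ)))

/-- A bundled finite digraph. -/
structure FinDigraph where
  V : Type
  [fin : Fintype V]
  [deq : DecidableEq V]
  G : Digraph V
  [dec : DecidableRel G.Adj]

attribute [instance] FinDigraph.fin FinDigraph.deq FinDigraph.dec

/-- One straight-converting step: the bundled line digraph. -/
def FinDigraph.line (H : FinDigraph) : FinDigraph where
  V := {e : H.V × H.V // H.G.Adj e.1 e.2}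
  G := lineDigraph H.G

/-- The `j`-fold iterated line digraph. -/
def FinDigraph.iterLine (H : FinDigraph) : ℕ → FinDigraph
  | 0 => H
  | j + 1 => (H.iterLine j).line

/-- Canonical: every vertex simple. -/
def FinDigraph.Canonical (H : FinDigraph) : Prop :=
  ∀ v : H.V, indeg H.G v ≤ 1 ∨ outdeg H.G v ≤ 1

/-- Contains a complicated vertex. -/
def FinDigraph.HasComplicated (H : FinDigraph) : Prop :=
  ∃ v : H.V, 2 ≤ indeg H.G v ∧ 2 ≤ outdeg H.G v

/-- An `l₃₁`-interval of length `ℓ`. -/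
def IsL31 {V : Type u} (G : Digraph V) [Fintype V] [DecidableRel G.Adj] {ℓ : ℕ}
    (w : Fin (ℓ + 1) → V) : Prop :=
  IsWalk G w ∧ 2 ≤ indeg G (w 0) ∧ 2 ≤ outdeg G (w (Fin.last ℓ)) ∧
    ∀ i : Fin (ℓ + 1), 0 < (i : ℕ) → (i : ℕ) < ℓ →
      indeg G (w i) = 1 ∧ outdeg G (w i) = 1

/-- A directed cycle of length `k`. -/
def IsCycle {V : Type u} (G : Digraph V) {k : ℕ} (w : Fin (k + 1) → V) : Prop :=
  IsWalk G w ∧ w 0 = w (Fin.last k) ∧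
    ∀ i j : Fin (k + 1), (i : ℕ) < k → (j : ℕ) < k → w i = w j → i = j

/-- `G` has a contour: a directed cycle with both an entry edge and an exit edge. -/
def HasContour {V : Type u} (G : Digraph V) : Prop :=
  ∃ (k : ℕ) (w : Fin (k + 2) → V), IsCycle G (k := k + 1) w ∧
    (∃ a b : V, G.Adj a b ∧ (∃ i, w i = b) ∧
      ¬ ∃ i : Fin (k + 1), w i.castSucc = a ∧ w i.succ = b) ∧
    (∃ a b : V, G.Adj a b ∧ (∃ i, w i = a) ∧
      ¬ ∃ i : Fin (k + 1), w i.castSucc = a ∧ w i.succ = b)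

/-!
A vertex of `L^j(G)` is a walk of length `j` in `G`, and an arc `p → q` of `L^j(G)` is a walk of
length `j + 1` with initial segment `p` and final segment `q`. Hence the in-neighbours of a walk
correspond to those of its first vertex and its out-neighbours to those of its last vertex, so
`L^j(G)` is canonical iff no walk of length `j` starts at a convergent vertex and ends at a
divergent one. As subwalks of walks are walks, this holds for all `j ≥ 1` iff every walk is
holonomic, while `j = 0` is the canonicity of `G`.
-/

theorem Fin.tail_snoc {α : Type*} {n : ℕ} (p : Fin (n + 1) → α) (x : α) :
    Fin.tail (Fin.snoc p x : Fin (n + 2) → α) = Fin.snoc (Fin.tail p) x := by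
  ext i
  induction i using Fin.lastCases with
  | last => simp [Fin.tail]
  | cast i => simp only [Fin.tail, Fin.succ_castSucc, Fin.snoc_castSucc]

theorem Fin.init_cons {α : Type*} {n : ℕ} (x : α) (p : Fin (n + 1) → α) :
    Fin.init (Fin.cons x p : Fin (n + 2) → α) = Fin.cons x (Fin.init p) := by
  ext i
  induction i using Fin.cases with
  | zero => simp [Fin.init]
  | succ i => simp [Fin.init]

section Walks

variable {V : Type u} {G : Digraph V}

theorem IsWalk.init {k : ℕ} {w : Fin (k + 2) → V} (hw : IsWalk G w) :
    IsWalk G (Fin.init w) := fun i => by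
  have := hw i.castSucc
  rwa [Fin.succ_castSucc] at this

theorem IsWalk.tail {k : ℕ} {w : Fin (k + 2) → V} (hw : IsWalk G w) :
    IsWalk G (Fin.tail w) := fun i => by
  have := hw i.succ
  rwa [← Fin.succ_castSucc] at this

theorem IsWalk.snoc {k : ℕ} {w : Fin (k + 1) → V} {x : V} (hw : IsWalk G w)
    (hx : G.Adj (w (Fin.last k)) x) : IsWalk G (Fin.snoc w x : Fin (k + 2) → V) := fun i => by
  induction i using Fin.lastCases with
  | last => simpa using hx
  | cast i => simpa only [Fin.snoc_castSucc, Fin.succ_castSucc] using hw i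

theorem IsWalk.cons {k : ℕ} {w : Fin (k + 1) → V} {x : V} (hw : IsWalk G w)
    (hx : G.Adj x (w 0)) : IsWalk G (Fin.cons x w : Fin (k + 2) → V) := fun i => by
  induction i using Fin.cases with
  | zero => simpa using hx
  | succ i => simpa [← Fin.succ_castSucc] using hw i

theorem IsWalk.exists_segment {k : ℕ} {w : Fin (k + 1) → V} (hw : IsWalk G w)
    {a b : Fin (k + 1)} (hab : a ≤ b) :
    ∃ (m : ℕ) (u : Fin (m + 1) → V), IsWalk G u ∧ u 0 = w a ∧ u (Fin.last m) = w b := by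
  have hab' : (a : ℕ) ≤ b := hab
  refine ⟨b - a, fun t => w ⟨a + t, by omega⟩, fun t => ?_, rfl, ?_⟩
  · convert hw ⟨a + t, by omega⟩ using 2
    all_goals ext; simp only [Fin.val_castSucc, Fin.val_succ, Nat.add_assoc]
  · simp only [Fin.val_last]
    congr
    omega

end Walks

section WalkDigraph

variable {V : Type u} {W : Type*} {G : Digraph V}

variable (G) in
/-- The model of `L^j(G)`: `p → q` iff `p` and `q` are the initial and final segments of one
walk of length `j + 1`. -/
def walkDigraph (j : ℕ) : Digraph {w : Fin (j + 1) → V // IsWalk G w} where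
  Adj p q := Fin.tail p.1 = Fin.init q.1 ∧ G.Adj (p.1 (Fin.last j)) (q.1 (Fin.last j))

instance [DecidableEq V] [DecidableRel G.Adj] {j : ℕ} : DecidableRel (walkDigraph G j).Adj :=
  fun _ _ => inferInstanceAs (Decidable (_ ∧ _))

theorem walkDigraph_adj_of_isWalk {j : ℕ} {u : Fin (j + 2) → V} (hu : IsWalk G u)
    {p q : {w : Fin (j + 1) → V // IsWalk G w}} (hp : p.1 = Fin.init u) (hq : q.1 = Fin.tail u) :
    (walkDigraph G j).Adj p q := by
  refine ⟨by rw [hp, hq, Fin.tail_init_eq_init_tail], ?_⟩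
  rw [hp, hq]
  simpa [Fin.init, Fin.tail] using hu (Fin.last j)

theorem tail_snoc_of_walkDigraph_adj {j : ℕ} {p q : {w : Fin (j + 1) → V // IsWalk G w}}
    (h : (walkDigraph G j).Adj p q) :
    Fin.tail (Fin.snoc p.1 (q.1 (Fin.last j)) : Fin (j + 2) → V) = q.1 := by
  rw [Fin.tail_snoc, h.1, Fin.snoc_init_self]

theorem isWalk_snoc_of_walkDigraph_adj {j : ℕ} {p q : {w : Fin (j + 1) → V // IsWalk G w}}
    (h : (walkDigraph G j).Adj p q) :
    IsWalk G (Fin.snoc p.1 (q.1 (Fin.last j)) : Fin (j + 2) → V) :=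
  p.2.snoc h.2

theorem adj_zero_of_walkDigraph_adj {j : ℕ} {p q : {w : Fin (j + 1) → V // IsWalk G w}}
    (h : (walkDigraph G j).Adj p q) : G.Adj (p.1 0) (q.1 0) := by
  have h0 := isWalk_snoc_of_walkDigraph_adj h 0
  have h1 : (Fin.snoc p.1 (q.1 (Fin.last j)) : Fin (j + 2) → V) (Fin.succ 0) = q.1 0 :=
    congrFun (tail_snoc_of_walkDigraph_adj h) 0
  rwa [Fin.snoc_castSucc, h1] at h0

theorem walkDigraph_adj_snoc_iff {j : ℕ} {p q p' q' : {w : Fin (j + 1) → V // IsWalk G w}}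
    (h : (walkDigraph G j).Adj p q) (h' : (walkDigraph G j).Adj p' q') :
    (walkDigraph G (j + 1)).Adj ⟨_, isWalk_snoc_of_walkDigraph_adj h⟩
      ⟨_, isWalk_snoc_of_walkDigraph_adj h'⟩ ↔ q = p' := by
  simp only [walkDigraph]
  rw [tail_snoc_of_walkDigraph_adj h, Fin.init_snoc, Fin.snoc_last, Fin.snoc_last,
    ← Subtype.ext_iff]
  exact ⟨And.left, fun hqp => ⟨hqp, hqp ▸ h'.2⟩⟩

variable (G) in
def walkDigraphZeroRelIso : G.Adj ≃r (walkDigraph G 0).Adj where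
  toFun v := ⟨fun _ => v, fun i => i.elim0⟩
  invFun p := p.1 0
  left_inv v := rfl
  right_inv p := Subtype.ext (funext fun i => by rw [Subsingleton.elim (α := Fin 1) i 0])
  map_rel_iff' := ⟨And.right, fun h => ⟨funext fun i => i.elim0, h⟩⟩

def lineDigraphCongr {G' : Digraph W} (e : G.Adj ≃r G'.Adj) :
    (lineDigraph G).Adj ≃r (lineDigraph G').Adj where
  toFun a := ⟨(e a.1.1, e a.1.2), e.map_rel_iff.2 a.2⟩
  invFun b := ⟨(e.symm b.1.1, e.symm b.1.2), e.symm.map_rel_iff.2 b.2⟩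
  left_inv a := by simp
  right_inv b := by simp
  map_rel_iff' := e.injective.eq_iff

variable (G) in
def lineWalkDigraphRelIso (j : ℕ) :
    (lineDigraph (walkDigraph G j)).Adj ≃r (walkDigraph G (j + 1)).Adj where
  toFun a := ⟨Fin.snoc a.1.1.1 (a.1.2.1 (Fin.last j)), isWalk_snoc_of_walkDigraph_adj a.2⟩
  invFun u := ⟨(⟨Fin.init u.1, u.2.init⟩, ⟨Fin.tail u.1, u.2.tail⟩),
    walkDigraph_adj_of_isWalk u.2 rfl rfl⟩
  left_inv a := by
    ext
    · simp [Fin.init_snoc]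
    · simp [tail_snoc_of_walkDigraph_adj a.2]
  right_inv u := Subtype.ext (by simp [Fin.tail])
  map_rel_iff' {a b} := walkDigraph_adj_snoc_iff a.2 b.2

end WalkDigraph

section Degrees

variable {V : Type u} {W : Type*} {G : Digraph V} [Fintype V] [DecidableRel G.Adj]

theorem indeg_relIso {G' : Digraph W} [Fintype W] [DecidableRel G'.Adj]
    (e : G.Adj ≃r G'.Adj) (v : V) : indeg G' (e v) = indeg G v := by
  simp only [indeg, ← Fintype.card_subtype]
  exact Fintype.card_congr
    (e.toEquiv.subtypeEquiv (p := (G.Adj · v)) (q := (G'.Adj · (e v)))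
      fun _ => e.map_rel_iff.symm).symm

theorem outdeg_relIso {G' : Digraph W} [Fintype W] [DecidableRel G'.Adj]
    (e : G.Adj ≃r G'.Adj) (v : V) : outdeg G' (e v) = outdeg G v := by
  simp only [outdeg, ← Fintype.card_subtype]
  exact Fintype.card_congr
    (e.toEquiv.subtypeEquiv (p := G.Adj v) (q := G'.Adj (e v))
      fun _ => e.map_rel_iff.symm).symm

variable [DecidableEq V] {j : ℕ}

theorem indeg_walkDigraph (p : {w : Fin (j + 1) → V // IsWalk G w}) :
    indeg (walkDigraph G j) p = indeg G (p.1 0) := by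
  simp only [indeg, ← Fintype.card_subtype]
  refine Fintype.card_congr
    { toFun q := ⟨q.1.1 0, adj_zero_of_walkDigraph_adj q.2⟩
      invFun u := ⟨⟨Fin.init (Fin.cons u.1 p.1 : Fin (j + 2) → V), (p.2.cons u.2).init⟩,
        walkDigraph_adj_of_isWalk (p.2.cons u.2) rfl (by rw [Fin.tail_cons])⟩
      left_inv q := ?_
      right_inv u := ?_ }
  · ext1; ext1
    dsimp only
    rw [Fin.init_cons, ← q.2.1, Fin.cons_self_tail]
  · ext1
    simp [Fin.init_cons]

theorem outdeg_walkDigraph (p : {w : Fin (j + 1) → V // IsWalk G w}) :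
    outdeg (walkDigraph G j) p = outdeg G (p.1 (Fin.last j)) := by
  simp only [outdeg, ← Fintype.card_subtype]
  refine Fintype.card_congr
    { toFun q := ⟨q.1.1 (Fin.last j), q.2.2⟩
      invFun x := ⟨⟨Fin.tail (Fin.snoc p.1 x.1 : Fin (j + 2) → V), (p.2.snoc x.2).tail⟩,
        walkDigraph_adj_of_isWalk (p.2.snoc x.2) (by rw [Fin.init_snoc]) rfl⟩
      left_inv q := ?_
      right_inv x := ?_ }
  · ext1; ext1
    exact tail_snoc_of_walkDigraph_adj q.2
  · ext1
    simp [Fin.tail_snoc]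

end Degrees

def FinDigraph.iterLineRelIso (H : FinDigraph) :
    (j : ℕ) → (H.iterLine j).G.Adj ≃r (walkDigraph H.G j).Adj
  | 0 => walkDigraphZeroRelIso H.G
  | j + 1 => (lineDigraphCongr (H.iterLineRelIso j)).trans (lineWalkDigraphRelIso H.G j)

theorem FinDigraph.canonical_iterLine_iff (H : FinDigraph) (j : ℕ) :
    (H.iterLine j).Canonical ↔ ∀ w : Fin (j + 1) → H.V, IsWalk H.G w →
      indeg H.G (w 0) ≤ 1 ∨ outdeg H.G (w (Fin.last j)) ≤ 1 := by
  rw [FinDigraph.Canonical, (H.iterLineRelIso j).toEquiv.forall_congr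
    (q := fun p => indeg (walkDigraph H.G j) p ≤ 1 ∨ outdeg (walkDigraph H.G j) p ≤ 1)
    fun v => by simp [indeg_relIso, outdeg_relIso]]
  simp only [Subtype.forall, indeg_walkDigraph, outdeg_walkDigraph]

/-- Theorem 11: for a canonical finite digraph `G`, every iterated
line digraph `L^j(G)` is canonical iff every directed walk in `G` is holonomic. -/
theorem iterLine_canonical_iff_holonomic (H : FinDigraph) (hcan : H.Canonical) :
    (∀ j : ℕ, (H.iterLine j).Canonical) ↔
    (∀ (k : ℕ) (w : Fin (k + 1) → H.V), IsWalk H.G w →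
      ¬ ∃ i j : Fin (k + 1), i < j ∧
        2 ≤ indeg H.G (w i) ∧ 2 ≤ outdeg H.G (w j)) := by
  constructor
  · rintro hall k w hw ⟨a, b, hab, ha, hb⟩
    obtain ⟨m, u, hu, hua, hub⟩ := hw.exists_segment hab.le
    have := (H.canonical_iterLine_iff m).1 (hall m) u hu
    rw [hua, hub] at this
    omega
  · intro hhol j
    cases j with
    | zero => exact hcan
    | succ j =>
      refine (H.canonical_iterLine_iff (j + 1)).2 fun w hw => ?_
      by_contra! h
      exact hhol _ w hw ⟨0, Fin.last _, Fin.last_pos, h.1, h.2⟩
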